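/- arXiv:2210.06055 — 2 statements merged into one kernel-verified Lean document; each statement's English description precedes it below -/
import Mathlib

section
/- Let 𝓕_m(n) = ∏_{p^α ∥ n} (f_{m-1}(α) − f_{m-1}(α−1)) where f_k(n) indicates H(n) ≤ k. Then |𝓕_m(n)| ≤ 1 for all n, and if 𝓕_m(n) ≠ 0 and p is a prime dividing n, then p^(2↑↑m) divides n. -/
/-!
An integer below `tet (k + 1) = 2 ^ tet k` has all its prime exponents below `tet k`, so by
induction its height is at most `k`. Hence if some prime exponent `α` of `n` is below `tet m`,
both `α` and `α - 1` have height at most `m - 1`, and the factor of `F m n` at that prime vanishes.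
-/

/-- Tetration base 2: `tet 0 = 1`, `tet (m+1) = 2 ^ tet m`. -/
def tet : ℕ → ℕ
  | 0 => 1
  | m + 1 => 2 ^ tet m

/-- Height of the super-factorization tree of `n`:
`H 1 = 0` and `H n = 1 + max_{p^α ∥ n} H α` for `n > 1`. -/
def H : ℕ → ℕ
  | n =>
    if h : n ≤ 1 then 0
    else 1 + (n.primeFactors.attach.sup fun p => H (n.factorization p.1))
decreasing_by
  exact Nat.factorization_lt _ (by omega)

/-- `f m n` = 1 if `H n ≤ m`, else 0. -/
def f (m n : ℕ) : ℤ := if H n ≤ m then 1 else 0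

/-- `F m n = ∏_{p^α ∥ n} (f (m-1) α - f (m-1) (α-1))`. -/
def F (m n : ℕ) : ℤ :=
  ∏ p ∈ n.primeFactors, (f (m - 1) (n.factorization p) - f (m - 1) (n.factorization p - 1))

lemma H_eq_zero_of_le_one {n : ℕ} (hn : n ≤ 1) : H n = 0 := by
  rw [H, dif_pos hn]

lemma H_le_succ {n k : ℕ} (h : ∀ p ∈ n.primeFactors, H (n.factorization p) ≤ k) :
    H n ≤ k + 1 := by
  rw [H]
  split
  · omega
  · rw [add_comm]
    exact Nat.add_le_add_right (Finset.sup_le fun p _ => h p.1 p.2) 1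

lemma Nat.factorization_lt_of_lt_two_pow {n a p : ℕ} (hp : p ∈ n.primeFactors)
    (hn : n < 2 ^ a) : n.factorization p < a := by
  obtain ⟨hp, -, hn0⟩ := Nat.mem_primeFactors.mp hp
  refine (Nat.pow_lt_pow_iff_right (by norm_num : 1 < 2)).mp (lt_of_le_of_lt ?_ hn)
  calc 2 ^ n.factorization p ≤ p ^ n.factorization p := Nat.pow_le_pow_left hp.two_le _
    _ ≤ n := Nat.ordProj_le p hn0

lemma H_le_of_lt_tet_succ {k n : ℕ} (hn : n < tet (k + 1)) : H n ≤ k := by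
  induction k generalizing n with
  | zero => exact (H_eq_zero_of_le_one (Nat.le_of_lt_succ hn)).le
  | succ k ih => exact H_le_succ fun p hp => ih (Nat.factorization_lt_of_lt_two_pow hp hn)

lemma f_eq_one_of_lt_tet_succ {k a : ℕ} (ha : a < tet (k + 1)) : f k a = 1 :=
  if_pos (H_le_of_lt_tet_succ ha)

lemma abs_f_sub_f_le_one (k a b : ℕ) : |f k a - f k b| ≤ 1 := by
  unfold f
  split_ifs <;> norm_num

lemma abs_F_le_one (m n : ℕ) : |F m n| ≤ 1 := by
  rw [F, Finset.abs_prod]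
  exact Finset.prod_le_one (fun _ _ => abs_nonneg _) fun _ _ => abs_f_sub_f_le_one _ _ _

lemma pow_tet_succ_dvd_of_F_ne_zero {k n p : ℕ} (hF : F (k + 1) n ≠ 0) (hp : p.Prime)
    (hpn : p ∣ n) : p ^ tet (k + 1) ∣ n := by
  rcases eq_or_ne n 0 with rfl | hn0
  · exact dvd_zero _
  have hmem : p ∈ n.primeFactors := Nat.mem_primeFactors.mpr ⟨hp, hpn, hn0⟩
  have hα : tet (k + 1) ≤ n.factorization p := by
    by_contra! hlt
    apply hF
    refine Finset.prod_eq_zero hmem ?_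
    rw [Nat.add_sub_cancel, f_eq_one_of_lt_tet_succ hlt,
      f_eq_one_of_lt_tet_succ (lt_of_le_of_lt (Nat.sub_le _ 1) hlt), sub_self]
  exact (pow_dvd_pow p hα).trans (Nat.ordProj_dvd n p)

theorem stmt6_general (m : ℕ) (n : ℕ) :
    |F m n| ≤ 1 ∧
      (F m n ≠ 0 → ∀ p : ℕ, p.Prime → p ∣ n → p ^ tet m ∣ n) := by
  refine ⟨abs_F_le_one m n, fun hF p hp hpn => ?_⟩
  cases m with
  | zero => simpa [tet] using hpn
  | succ k => exact pow_tet_succ_dvd_of_F_ne_zero hF hp hpn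

theorem stmt6 (m : ℕ) (hm : 1 ≤ m) (n : ℕ) (hn : 1 ≤ n) :
    |F m n| ≤ 1 ∧
      (F m n ≠ 0 → ∀ p : ℕ, p.Prime → p ∣ n → p ^ tet m ∣ n) :=
  stmt6_general m n
end

section
/- Let m ≥ 3, α = 2↑↑(m−1), and suppose n < 3^α. Then H(n) = m if and only if n = 2^α · a for some odd a (necessarily a < 1.5^α). Moreover, if n < 3^α is not of this form, then H(n) ≤ m−1. -/
lemma H_of_le_one {n : ℕ} (h : n ≤ 1) : H n = 0 := by
  rw [H, dif_pos h]

lemma H_eq_one_add_sup {n : ℕ} (h : 2 ≤ n) :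
    H n = 1 + n.primeFactors.sup fun p => H (n.factorization p) := by
  rw [H, dif_neg (by omega), Finset.sup_attach n.primeFactors fun p => H (n.factorization p)]

lemma H_factorization_lt {n p : ℕ} (hp : p ∈ n.primeFactors) :
    H (n.factorization p) < H n := by
  rw [H_eq_one_add_sup
    ((Nat.prime_of_mem_primeFactors hp).two_le.trans (Nat.le_of_mem_primeFactors hp))]
  have := Finset.le_sup (f := fun p => H (n.factorization p)) hp
  omega

lemma H_eq_succ_iff {n k : ℕ} (h : ∀ p ∈ n.primeFactors, H (n.factorization p) ≤ k) :
    H n = k + 1 ↔ ∃ p ∈ n.primeFactors, H (n.factorization p) = k := by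
  refine ⟨fun hn => ?_,
    fun ⟨p, hp, hpk⟩ => le_antisymm (H_le_succ h) (hpk ▸ H_factorization_lt hp)⟩
  have h2 : 2 ≤ n := by
    by_contra! h1
    rw [H_of_le_one (by omega)] at hn
    omega
  obtain ⟨p, hp, hsup⟩ := Finset.exists_mem_eq_sup _ (Nat.nonempty_primeFactors.2 h2)
    fun p => H (n.factorization p)
  rw [H_eq_one_add_sup h2, hsup] at hn
  exact ⟨p, hp, by omega⟩

lemma H_prime {p : ℕ} (hp : p.Prime) : H p = 1 := by
  rw [H_eq_one_add_sup hp.two_le, hp.primeFactors, Finset.sup_singleton, hp.factorization_self,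
    H_of_le_one le_rfl]

lemma factorization_lt_of_lt_pow {n p b N : ℕ} (hp : p.Prime) (hb : b ≤ p) (hn : n ≠ 0)
    (h : n < b ^ N) : n.factorization p < N := by
  by_contra! hN
  have : b ^ N ≤ n := calc
    b ^ N ≤ p ^ N := Nat.pow_le_pow_left hb N
    _ ≤ p ^ n.factorization p := Nat.pow_le_pow_right hp.pos hN
    _ ≤ n := Nat.ordProj_le p hn
  omega

lemma factorization_two_eq_iff_of_lt {v α : ℕ} (hv : v ≠ 0) (h : v < 2 ^ (α + 1)) :
    v.factorization 2 = α ↔ v = 2 ^ α := by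
  refine ⟨?_, fun hv => by rw [hv, Nat.prime_two.factorization_pow, Finsupp.single_eq_same]⟩
  rintro rfl
  have hsplit := Nat.ordProj_mul_ordCompl_eq_self v 2
  have hlt : ordCompl[2] v < 2 :=
    Nat.lt_of_mul_lt_mul_left (a := 2 ^ v.factorization 2) (by rwa [hsplit, ← pow_succ])
  have hone : ordCompl[2] v = 1 := by have := Nat.ordCompl_pos 2 hv; omega
  rw [hone, mul_one] at hsplit
  exact hsplit.symm

lemma exists_odd_eq_two_pow_mul_iff {n T : ℕ} (hn : n ≠ 0) :
    (∃ a : ℕ, Odd a ∧ n = 2 ^ T * a) ↔ n.factorization 2 = T := by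
  constructor
  · rintro ⟨a, ha, rfl⟩
    have h2 : ¬ 2 ∣ a := by rwa [← even_iff_two_dvd, Nat.not_even_iff_odd]
    rw [Nat.factorization_mul (by positivity) (by rintro rfl; simp at ha), Finsupp.add_apply,
      Nat.factorization_eq_zero_of_not_dvd h2, Nat.prime_two.factorization_pow,
      Finsupp.single_eq_same, add_zero]
  · rintro rfl
    refine ⟨ordCompl[2] n, ?_, (Nat.ordProj_mul_ordCompl_eq_self n 2).symm⟩
    rw [← Nat.not_even_iff_odd, even_iff_two_dvd]
    exact Nat.not_dvd_ordCompl Nat.prime_two hn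

def HeightCriterion (k α N : ℕ) : Prop :=
  ∀ n, 0 < n → n < N → H n ≤ k ∧ (H n = k ↔ n.factorization 2 = α)

lemma HeightCriterion.mono {k α N N' : ℕ} (h : HeightCriterion k α N') (hN : N ≤ N') :
    HeightCriterion k α N :=
  fun n hn hlt => h n hn (hlt.trans_le hN)

lemma heightCriterion_of_exponents {k e N : ℕ} (he : e ≠ 0)
    (h : ∀ n, 0 < n → n < N → ∀ p ∈ n.primeFactors, H (n.factorization p) ≤ k ∧
      (H (n.factorization p) = k ↔ p = 2 ∧ n.factorization p = e)) :
    HeightCriterion (k + 1) e N := by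
  intro n hn hN
  have hexp := h n hn hN
  refine ⟨H_le_succ fun p hp => (hexp p hp).1, ?_⟩
  rw [H_eq_succ_iff fun p hp => (hexp p hp).1]
  constructor
  · rintro ⟨p, hp, hk⟩
    obtain ⟨rfl, h2⟩ := (hexp p hp).2.1 hk
    exact h2
  · intro h2
    have hmem : 2 ∈ n.primeFactors := by
      rw [← Nat.support_factorization, Finsupp.mem_support_iff, h2]
      exact he
    exact ⟨2, hmem, (hexp 2 hmem).2.2 ⟨rfl, h2⟩⟩

lemma heightCriterion_two_two_eight : HeightCriterion 2 2 8 := by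
  refine heightCriterion_of_exponents two_ne_zero fun n hn h8 p hp => ?_
  have hprime := Nat.prime_of_mem_primeFactors hp
  have hv0 : n.factorization p ≠ 0 := Finsupp.mem_support_iff.1 hp
  have hv3 : n.factorization p < 3 :=
    factorization_lt_of_lt_pow hprime hprime.two_le hn.ne' (h8.trans_eq (by norm_num))
  rcases eq_or_ne p 2 with rfl | hp2
  · interval_cases n.factorization 2 <;> simp [H_of_le_one, H_prime Nat.prime_two]
  · have hv1 : n.factorization p = 1 := by
      have := factorization_lt_of_lt_pow hprime (b := 3) (by have := hprime.two_le; omega)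
        hn.ne' (h8.trans (by norm_num) : n < 3 ^ 2)
      omega
    simp [hv1, H_of_le_one, hp2]

lemma HeightCriterion.step {k α : ℕ} (h : HeightCriterion k α (2 ^ (α + 1))) :
    HeightCriterion (k + 1) (2 ^ α) (3 ^ 2 ^ α) := by
  refine heightCriterion_of_exponents (pow_ne_zero _ two_ne_zero) fun n hn hN p hp => ?_
  have hprime := Nat.prime_of_mem_primeFactors hp
  have hv0 : n.factorization p ≠ 0 := Finsupp.mem_support_iff.1 hp
  rcases eq_or_ne p 2 with rfl | hp2
  · have h34 : 3 ^ 2 ^ α ≤ 2 ^ 2 ^ (α + 1) := by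
      rw [pow_succ', pow_mul]
      exact Nat.pow_le_pow_left (by norm_num) _
    have hv := factorization_lt_of_lt_pow Nat.prime_two le_rfl hn.ne' (hN.trans_le h34)
    obtain ⟨hle, hiff⟩ := h _ (Nat.pos_of_ne_zero hv0) hv
    exact ⟨hle, by rw [hiff, factorization_two_eq_iff_of_lt hv0 hv]; simp⟩
  · have hv := factorization_lt_of_lt_pow hprime (b := 3) (by have := hprime.two_le; omega)
      hn.ne' hN
    obtain ⟨hle, hiff⟩ := h _ (Nat.pos_of_ne_zero hv0)
      (hv.trans (Nat.pow_lt_pow_right one_lt_two (Nat.lt_succ_self α)))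
    refine ⟨hle, hiff.trans ⟨fun h2 => ?_, fun h2 => absurd h2.1 hp2⟩⟩
    exact absurd h2 (factorization_lt_of_lt_pow Nat.prime_two le_rfl hv0 hv).ne

lemma two_pow_succ_le_three_pow {x : ℕ} (hx : 2 ≤ x) : 2 ^ (x + 1) ≤ 3 ^ x := by
  induction x, hx using Nat.le_induction with
  | base => norm_num
  | succ x _ ih => rw [pow_succ, pow_succ 3]; omega

lemma two_le_tet_succ (k : ℕ) : 2 ≤ tet (k + 1) :=
  Nat.le_self_pow (by cases k <;> simp [tet]) 2

lemma heightCriterion_tet {m : ℕ} (hm : 3 ≤ m) :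
    HeightCriterion m (tet (m - 1)) (3 ^ tet (m - 1)) := by
  induction m, hm using Nat.le_induction with
  | base => exact heightCriterion_two_two_eight.step
  | succ m hm ih =>
    obtain ⟨j, rfl⟩ : ∃ j, m = j + 2 := ⟨m - 2, by omega⟩
    exact (ih.mono (two_pow_succ_le_three_pow (two_le_tet_succ j))).step

theorem stmt7 (m : ℕ) (hm : 3 ≤ m) (n : ℕ) (hn : 1 ≤ n)
    (hlt : n < 3 ^ tet (m - 1)) :
    (H n = m ↔ ∃ a : ℕ, Odd a ∧ n = 2 ^ tet (m - 1) * a) ∧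
      ((¬ ∃ a : ℕ, Odd a ∧ n = 2 ^ tet (m - 1) * a) → H n ≤ m - 1) := by
  obtain ⟨hle, hiff⟩ := heightCriterion_tet hm n hn hlt
  rw [exists_odd_eq_two_pow_mul_iff (by omega)]
  exact ⟨hiff, fun hne => by have := mt hiff.1 hne; omega⟩
end
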